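/- Assume N ≥ 5. Let (i,j), (i',j') ∈ Ŝ with (i,j) ≠ (0,0), let a ∈ A, and suppose there exists η ∈ (U¹ ∪ {σ^-}) ∩ Γ(σ_{(i,j)}^a) with I(η) = (i',j'). Then lim_{κ→∞} Q_κ(η | σ_{(i,j)}, a) exists and equals 1 if η = σ_{(i,j)}^a, and equals Σ_{ω∈Ω(σ_{(i,j)}^a, η)} Π_{ℓ=0}^{|ω|−1} 1/|Δ(ω_ℓ)| otherwise, where ω_ℓ denotes the ℓ-th configuration of the downhill path ω and |ω| its length. -/

import Mathlib

open Filter Topology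

namespace IsingS

open scoped Classical

variable (N : ℕ) [NeZero N]

/-- Vertex set: the N×N discrete torus. -/
abbrev V := ZMod N × ZMod N

/-- Configurations: `true` encodes spin +1, `false` encodes spin -1. -/
abbrev Cfg := V N → Bool

/-- The spin value in ℤ of a Boolean spin. -/
def spin (b : Bool) : ℤ := if b then 1 else -1

/-- The four nearest neighbors of a vertex. -/
def nbrFinset (i : V N) : Finset (V N) :=
  {i + ((1 : ZMod N), (0 : ZMod N)), i + ((-1 : ZMod N), (0 : ZMod N)),
   i + ((0 : ZMod N), (1 : ZMod N)), i + ((0 : ZMod N), (-1 : ZMod N))}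

/-- The Hamiltonian with external magnetic field `h`. -/
noncomputable def H (h : ℝ) (σ : Cfg N) : ℝ :=
  -(1/2) * (((∑ i : V N, ∑ j ∈ nbrFinset N i, spin (σ i) * spin (σ j)) : ℤ) : ℝ)
    - h * (((∑ i : V N, spin (σ i)) : ℤ) : ℝ)

/-- Flip the spin at vertex `i`. -/
def flip (σ : Cfg N) (i : V N) : Cfg N := Function.update σ i (!σ i)

/-- Spin `i` is susceptible in `σ` if flipping it does not increase the energy. -/
def susceptible (h : ℝ) (σ : Cfg N) (i : V N) : Prop :=
  H N h (flip N σ i) ≤ H N h σ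

/-- A configuration is robust if it has no susceptible spins. -/
def robust (h : ℝ) (σ : Cfg N) : Prop := ∀ i : V N, ¬ susceptible N h σ i

/-- The set of robust configurations. -/
noncomputable def Uset (h : ℝ) : Finset (Cfg N) :=
  Finset.univ.filter (fun σ => robust N h σ)

/-- Metropolis rate of flipping spin `i` from `σ` at inverse temperature `β`. -/
noncomputable def metroRate (h β : ℝ) (σ : Cfg N) (i : V N) : ℝ :=
  (1 / (N : ℝ) ^ 2) * min 1 (Real.exp (-β * (H N h (flip N σ i) - H N h σ)))

/-- The Metropolis transition matrix at inverse temperature `β`. -/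
noncomputable def pβ (h β : ℝ) (σ η : Cfg N) : ℝ :=
  if η = σ then 1 - ∑ i : V N, metroRate N h β σ i
  else ∑ i ∈ Finset.univ.filter (fun i => flip N σ i = η), metroRate N h β σ i

/-- The low-temperature dynamics `p̃ = lim_{β→∞} p_β`. -/
noncomputable def ptilde (h : ℝ) (σ η : Cfg N) : ℝ :=
  limUnder atTop (fun β : ℝ => pβ N h β σ η)

/-- The low-temperature dynamics as a matrix. -/
noncomputable def Pmat (h : ℝ) : Matrix (Cfg N) (Cfg N) ℝ :=
  fun σ η => ptilde N h σ η

/-- κ-step low-temperature transition probabilities, started from the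
post-decision configuration of action `a` (an element of `V ∪ {0}`,
encoded as `Option (V N)` with `none` playing the role of `0`). -/
abbrev Act := Option (V N)

/-- Post-decision configuration. -/
def post (σ : Cfg N) : Act N → Cfg N
  | none => σ
  | some i => flip N σ i

/-- `P̃_κ(η | σ, a)`. -/
noncomputable def Ptilκ (h : ℝ) (κ : ℕ) (σ : Cfg N) (a : Act N) (η : Cfg N) : ℝ :=
  (Pmat N h ^ κ) (post N σ a) η

/-- `Q_κ(η | σ, a)`, the κ-step probabilities conditioned on ending in a robust
configuration (with the convention 0/0 = 0). -/
noncomputable def Qκ (h : ℝ) (κ : ℕ) (σ : Cfg N) (a : Act N) (η : Cfg N) : ℝ :=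
  if robust N h η then
    Ptilκ N h κ σ a η / ∑ η' ∈ Uset N h, Ptilκ N h κ σ a η'
  else 0

/-- The set of susceptible spins of `σ`. -/
noncomputable def deltaSet (h : ℝ) (σ : Cfg N) : Finset (V N) :=
  Finset.univ.filter (fun i => susceptible N h σ i)

/-- The all-minus configuration. -/
def minusCfg : Cfg N := fun _ => false

/-- The set of spins in state +1. -/
def plusSet (σ : Cfg N) : Set (V N) := {v | σ v = true}

/-- The nearest-neighbor graph on the torus. -/
def torusGraph : SimpleGraph (V N) :=
  SimpleGraph.fromRel (fun i j =>
    j = i + ((1 : ZMod N), (0 : ZMod N)) ∨ j = i + ((0 : ZMod N), (1 : ZMod N)))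

/-- The +1 spins of `σ` form a single (nonempty, connected) cluster. -/
def singleCluster (σ : Cfg N) : Prop :=
  ((torusGraph N).induce (plusSet N σ)).Connected

/-- The +1 spins of `σ` form an `i × j` rectangle. -/
def isRect (σ : Cfg N) (i j : ℕ) : Prop :=
  ∃ x₀ y₀ : ZMod N, plusSet N σ =
    {p : V N | ∃ x < i, ∃ y < j, p = (x₀ + (x : ZMod N), y₀ + (y : ZMod N))}

/-- `U¹`: robust configurations, different from the all-minus configuration,
whose +1 spins form a single cluster. -/
def U1 (h : ℝ) (σ : Cfg N) : Prop :=
  robust N h σ ∧ σ ≠ minusCfg N ∧ singleCluster N σ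

/-- Side lengths in `{2, …, N-2} ∪ {N}`. -/
def goodIdx (n i : ℕ) : Prop := (2 ≤ i ∧ i ≤ n - 2) ∨ i = n

/-- The auxiliary state space `Ŝ`. -/
def ShatP (n : ℕ) (p : ℕ × ℕ) : Prop :=
  (goodIdx n p.1 ∧ goodIdx n p.2) ∨ p = (0, 0)

/-- One downhill step: a single spin flip that does not increase the energy. -/
def stepRel (h : ℝ) (σ η : Cfg N) : Prop :=
  (∃ i : V N, η = flip N σ i) ∧ H N h η ≤ H N h σ

/-- `l` is a downhill path from `σ` to `η` (encoded as the list of its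
configurations `[σ_0, …, σ_ℓ]`). -/
def IsPathBetween (h : ℝ) (σ η : Cfg N) (l : List (Cfg N)) : Prop :=
  l.head? = some σ ∧ l.getLast? = some η ∧ l.Chain' (stepRel N h)

/-- `η` is a downhill configuration of `σ` (i.e. `η ∈ Γ(σ)`). -/
def downhillOf (h : ℝ) (σ η : Cfg N) : Prop :=
  η = σ ∨ ∃ l : List (Cfg N), IsPathBetween N h σ η l

/-- The weight `Π_{ℓ=0}^{|ω|-1} 1/|Δ(ω_ℓ)|` of a downhill path. -/
noncomputable def pathWeight (h : ℝ) (l : List (Cfg N)) : ℝ :=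
  (l.dropLast.map (fun τ => ((deltaSet N h τ).card : ℝ)⁻¹)).prod

/-- `I(η) = p`: the all-minus configuration corresponds to `(0,0)`, and a
configuration of `U¹` whose +1 spins form an `i×j` rectangle corresponds to `(i,j)`. -/
def Irel (h : ℝ) (η : Cfg N) (p : ℕ × ℕ) : Prop :=
  (η = minusCfg N ∧ p = (0, 0)) ∨ (U1 N h η ∧ isRect N η p.1 p.2)

/-- `σ_{(i,j)}`: the configuration whose +1 spins are exactly
`{(x, y) : 0 ≤ x < i, 0 ≤ y < j}`. -/
def sigmaRect (i j : ℕ) : Cfg N := fun v => decide (v.1.val < i ∧ v.2.val < j)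

end IsingS

/-!
Since `0 < h < 1`, no spin flip leaves `H` unchanged, so every move of the zero-temperature
dynamics `p̃` strictly lowers the energy, and robust configurations are absorbing. From a
non-robust `σ`, one step of `p̃` stays at `σ` with probability `1 - |Δ(σ)|/N²` and otherwise moves
to a uniformly chosen `σ^i`, `i ∈ Δ(σ)`. By induction along decreasing energy, `(p̃^κ f)(σ)`
therefore converges to the function that agrees with `f` on robust configurations and, off them,
is the mean of its values at the susceptible flips. Both the downhill path sum to a robust `η`
(for `f = 1_η`) and the constant `1` (for `f = 1_U`) are such functions, so `Q_κ(η | σ, a)` tends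
to the path sum from `σ^a`, which is `1` when `σ^a = η`.
-/

theorem sum_sum_mul_update_neg {α R : Type*} [Fintype α] [DecidableEq α] [CommRing R]
    (nbr : α → Finset α) (nbr_comm : ∀ v w, w ∈ nbr v ↔ v ∈ nbr w) (nbr_irrefl : ∀ v, v ∉ nbr v)
    (f : α → R) (i : α) :
    ∑ v, ∑ w ∈ nbr v, Function.update f i (-f i) v * Function.update f i (-f i) w
      = ∑ v, ∑ w ∈ nbr v, f v * f w - 4 * f i * ∑ w ∈ nbr i, f w := by
  set d : α → R := fun v => if v = i then f i else 0
  have hupd : Function.update f i (-f i) = fun v => f v - 2 * d v := by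
    ext v; by_cases hv : v = i <;> simp [d, hv]; ring
  have hleft : ∑ v, d v * ∑ w ∈ nbr v, f w = f i * ∑ w ∈ nbr i, f w := by simp [d]
  have hright : ∑ v, f v * ∑ w ∈ nbr v, d w = f i * ∑ w ∈ nbr i, f w := by
    simp [d, ← nbr_comm i, Finset.mul_sum, mul_comm]
  have hdiag : ∑ v, d v * ∑ w ∈ nbr v, d w = 0 :=
    Finset.sum_eq_zero fun v _ => by by_cases hv : v = i <;> simp [d, hv, nbr_irrefl]
  have hexp : ∀ v w, (f v - 2 * d v) * (f w - 2 * d w)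
      = f v * f w - 2 * (d v * f w) - 2 * (f v * d w) + 4 * (d v * d w) := fun v w => by ring
  simp only [hupd, hexp, Finset.sum_add_distrib, Finset.sum_sub_distrib, ← Finset.mul_sum]
  rw [hleft, hright, hdiag]
  ring

theorem tendsto_min_one_exp_neg_mul (d : ℝ) :
    Tendsto (fun β : ℝ => min 1 (Real.exp (-β * d))) atTop (𝓝 (if d ≤ 0 then 1 else 0)) := by
  split_ifs with hd
  · refine tendsto_const_nhds.congr' ?_
    filter_upwards [eventually_ge_atTop 0] with β hβ
    have hexp := Real.one_le_exp (mul_nonneg_of_nonpos_of_nonpos (neg_nonpos.mpr hβ) hd)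
    exact (min_eq_left hexp).symm
  · have hlin : Tendsto (fun β : ℝ => -β * d) atTop atBot := by
      refine (tendsto_id.atTop_mul_const_of_neg (r := -d) (by linarith)).congr fun β => ?_
      simp only [id, mul_neg, neg_mul]
    simpa using (tendsto_const_nhds (x := (1 : ℝ))).min (Real.tendsto_exp_atBot.comp hlin)

theorem tendsto_of_convex_recurrence {x c : ℕ → ℝ} {r L : ℝ} (hr0 : 0 < r) (hr1 : r ≤ 1)
    (hx : ∀ n, x (n + 1) = (1 - r) * x n + r * c n) (hc : Tendsto c atTop (𝓝 L)) :
    Tendsto x atTop (𝓝 L) := by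
  rw [Metric.tendsto_atTop] at hc ⊢
  intro ε hε
  have hε2 := half_pos hε
  obtain ⟨K, hK⟩ := hc (ε / 2) hε2
  have hbound : ∀ n, |x (K + n) - L| ≤ (1 - r) ^ n * |x K - L| + ε / 2 := by
    intro n
    induction n with
    | zero => simpa using hε2.le
    | succ n ih =>
      have hcK := (hK (K + n) (Nat.le_add_right K n)).le
      rw [Real.dist_eq] at hcK
      have hstep : x (K + (n + 1)) - L = (1 - r) * (x (K + n) - L) + r * (c (K + n) - L) := by
        rw [← add_assoc, hx]; ring
      calc |x (K + (n + 1)) - L|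
          ≤ (1 - r) * |x (K + n) - L| + r * |c (K + n) - L| := by
            rw [hstep]
            refine (abs_add_le _ _).trans_eq ?_
            rw [abs_mul, abs_mul, abs_of_nonneg (by linarith), abs_of_pos hr0]
        _ ≤ (1 - r) * ((1 - r) ^ n * |x K - L| + ε / 2) + r * (ε / 2) := by gcongr
        _ = (1 - r) ^ (n + 1) * |x K - L| + ε / 2 := by ring
  have hgeom : Tendsto (fun n => (1 - r) ^ n * |x K - L|) atTop (𝓝 0) := by
    simpa using (tendsto_pow_atTop_nhds_zero_of_lt_one (by linarith) (by linarith)).mul_const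
      |x K - L|
  obtain ⟨M, hM⟩ := Metric.tendsto_atTop.mp hgeom (ε / 2) hε2
  refine ⟨K + M, fun n hn => ?_⟩
  obtain ⟨m, rfl⟩ := Nat.exists_eq_add_of_le (le_trans (Nat.le_add_right K M) hn)
  have hm := hM m (by omega)
  rw [Real.dist_eq, sub_zero] at hm
  rw [Real.dist_eq]
  linarith [hbound m, le_abs_self ((1 - r) ^ m * |x K - L|)]

namespace IsingS

open scoped Classical Matrix

section Flip

variable {N : ℕ}

lemma spin_not (b : Bool) : spin (!b) = -spin b := by cases b <;> rfl

lemma spin_ne_zero (b : Bool) : spin b ≠ 0 := by cases b <;> decide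

lemma spin_flip (σ : Cfg N) (i : V N) :
    (fun v => spin (flip N σ i v)) = Function.update (fun v => spin (σ v)) i (-spin (σ i)) := by
  ext v
  by_cases hv : v = i
  · subst hv; simp [flip, spin_not]
  · simp [flip, hv]

lemma mem_nbrFinset_comm (v w : V N) : w ∈ nbrFinset N v ↔ v ∈ nbrFinset N w := by
  simp only [nbrFinset, Finset.mem_insert, Finset.mem_singleton]
  constructor <;> rintro (rfl | rfl | rfl | rfl) <;> simp [add_assoc]

lemma not_mem_nbrFinset_self (hN : 1 < N) (v : V N) : v ∉ nbrFinset N v := by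
  have : Fact (1 < N) := ⟨hN⟩
  simp [nbrFinset, Prod.ext_iff]

lemma flip_ne (σ : Cfg N) (i : V N) : flip N σ i ≠ σ := fun heq => by
  simpa [flip] using congrFun heq i

lemma flip_injective (σ : Cfg N) : Function.Injective (flip N σ) := fun i j heq => by
  by_contra hij
  simpa [flip, Function.update_of_ne hij] using congrFun heq i

end Flip

section Energy

variable {N : ℕ} [NeZero N]

lemma H_flip_sub (hN : 1 < N) (h : ℝ) (σ : Cfg N) (i : V N) :
    H N h (flip N σ i) - H N h σ
      = 2 * spin (σ i) * ((∑ w ∈ nbrFinset N i, spin (σ w) : ℤ) + h) := by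
  have hint := sum_sum_mul_update_neg (nbrFinset N) mem_nbrFinset_comm
    (not_mem_nbrFinset_self hN) (fun v => spin (σ v)) i
  have hmag := Finset.sum_update_of_mem (Finset.mem_univ i) (fun v => spin (σ v)) (-spin (σ i))
  rw [Finset.sum_sdiff_eq_sub (by simp), Finset.sum_singleton] at hmag
  have hflip := spin_flip σ i
  simp only [funext_iff] at hflip
  simp only [H, hflip, hint, hmag]
  push_cast
  ring

lemma H_flip_ne (hN : 1 < N) {h : ℝ} (hh0 : 0 < h) (hh1 : h < 1) (σ : Cfg N) (i : V N) :
    H N h (flip N σ i) ≠ H N h σ := by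
  intro heq
  have hsub := H_flip_sub hN h σ i
  rw [heq, sub_self, eq_comm] at hsub
  set K : ℤ := ∑ w ∈ nbrFinset N i, spin (σ w)
  have hK : (K : ℝ) + h = 0 := by
    simpa [spin_ne_zero] using hsub
  have hneg : K < 0 := by exact_mod_cast (by linarith : (K : ℝ) < 0)
  have hgt : -1 < K := by exact_mod_cast (by push_cast; linarith : ((-1 : ℤ) : ℝ) < K)
  omega

lemma robust_minusCfg (hN : 1 < N) {h : ℝ} (hh1 : h < 1) : robust N h (minusCfg N) := by
  intro i hsus
  have hsub := H_flip_sub hN h (minusCfg N) i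
  have hcard : 1 ≤ (nbrFinset N i).card :=
    Finset.card_pos.mpr ⟨_, Finset.mem_insert_self _ _⟩
  have hK : (∑ w ∈ nbrFinset N i, spin (minusCfg N w) : ℤ) = -(nbrFinset N i).card := by
    simp [minusCfg, spin]
  rw [hK] at hsub
  have : (1 : ℝ) ≤ (nbrFinset N i).card := by exact_mod_cast hcard
  simp only [susceptible, minusCfg, spin] at hsub hsus
  push_cast at hsub
  linarith

end Energy

section Kernel

variable {N : ℕ} [NeZero N]

lemma tendsto_metroRate (h : ℝ) (σ : Cfg N) (i : V N) :
    Tendsto (fun β => metroRate N h β σ i) atTop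
      (𝓝 (if susceptible N h σ i then 1 / (N : ℝ) ^ 2 else 0)) := by
  have := (tendsto_min_one_exp_neg_mul (H N h (flip N σ i) - H N h σ)).const_mul (1 / (N : ℝ) ^ 2)
  simpa [susceptible, metroRate, apply_ite] using this

lemma Pmat_apply (h : ℝ) (σ η : Cfg N) :
    Pmat N h σ η = if η = σ then 1 - ((deltaSet N h σ).card : ℝ) / (N : ℝ) ^ 2
      else ({i ∈ deltaSet N h σ | flip N σ i = η}.card : ℝ) / (N : ℝ) ^ 2 := by
  set r : V N → ℝ := fun i => if susceptible N h σ i then 1 / (N : ℝ) ^ 2 else 0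
  have hrate := fun i (_ : i ∈ Finset.univ) => tendsto_metroRate h σ i
  have hlim : Tendsto (fun β => pβ N h β σ η) atTop
      (𝓝 (if η = σ then 1 - ∑ i, r i else ∑ i with flip N σ i = η, r i)) := by
    unfold pβ
    split_ifs
    · exact tendsto_const_nhds.sub (tendsto_finsetSum _ hrate)
    · exact tendsto_finsetSum _ fun i _ => hrate i (Finset.mem_univ i)
  rw [Pmat, ptilde, hlim.limUnder_eq]
  split_ifs <;> simp [r, Finset.sum_ite, deltaSet, Finset.filter_filter, and_comm, div_eq_mul_inv]

lemma Pmat_mulVec_apply (h : ℝ) (x : Cfg N → ℝ) (σ : Cfg N) :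
    (Pmat N h *ᵥ x) σ = (1 - ((deltaSet N h σ).card : ℝ) / (N : ℝ) ^ 2) * x σ
      + (∑ i ∈ deltaSet N h σ, x (flip N σ i)) / (N : ℝ) ^ 2 := by
  have hflips : ∑ τ ∈ Finset.univ.erase σ, Pmat N h σ τ * x τ
      = ∑ τ ∈ Finset.univ.erase σ, ∑ i ∈ deltaSet N h σ with flip N σ i = τ,
          x (flip N σ i) / (N : ℝ) ^ 2 := by
    refine Finset.sum_congr rfl fun τ hτ => ?_
    rw [Pmat_apply, if_neg (Finset.ne_of_mem_erase hτ),
      Finset.sum_congr rfl fun i hi => by rw [(Finset.mem_filter.mp hi).2], Finset.sum_const,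
      nsmul_eq_mul]
    ring
  rw [Matrix.mulVec, dotProduct, ← Finset.add_sum_erase _ _ (Finset.mem_univ σ), hflips,
    Finset.sum_fiberwise_of_maps_to fun i _ => Finset.mem_erase.mpr ⟨flip_ne σ i, by simp⟩,
    Pmat_apply, if_pos rfl, Finset.sum_div]

end Kernel

section Absorption

variable {N : ℕ} [NeZero N] {h : ℝ}

noncomputable def susceptibleMean (h : ℝ) (σ : Cfg N) (x : Cfg N → ℝ) : ℝ :=
  ((deltaSet N h σ).card : ℝ)⁻¹ * ∑ i ∈ deltaSet N h σ, x (flip N σ i)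

lemma mem_deltaSet {σ : Cfg N} {i : V N} : i ∈ deltaSet N h σ ↔ susceptible N h σ i := by
  simp [deltaSet]

lemma deltaSet_eq_empty_iff {σ : Cfg N} : deltaSet N h σ = ∅ ↔ robust N h σ := by
  simp [deltaSet, robust, Finset.filter_eq_empty_iff]

lemma pow_mulVec_apply_of_robust {σ : Cfg N} (hσ : robust N h σ) (x : Cfg N → ℝ) (κ : ℕ) :
    (Pmat N h ^ κ *ᵥ x) σ = x σ := by
  induction κ with
  | zero => simp
  | succ κ ih =>
    rw [pow_succ', ← Matrix.mulVec_mulVec, Pmat_mulVec_apply, deltaSet_eq_empty_iff.mpr hσ, ih]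
    simp

lemma tendsto_pow_mulVec_apply (hH : ∀ σ i, H N h (flip N σ i) ≠ H N h σ) (f v : Cfg N → ℝ)
    (hv_robust : ∀ σ, robust N h σ → v σ = f σ)
    (hv_mean : ∀ σ, ¬ robust N h σ → v σ = susceptibleMean h σ v) (σ : Cfg N) :
    Tendsto (fun κ => (Pmat N h ^ κ *ᵥ f) σ) atTop (𝓝 (v σ)) := by
  have : IsTrans (Cfg N) (fun τ σ => H N h τ < H N h σ) := ⟨fun _ _ _ => lt_trans⟩
  have : Std.Irrefl (fun τ σ : Cfg N => H N h τ < H N h σ) := ⟨fun _ => lt_irrefl _⟩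
  induction σ using
    (Finite.wellFounded_of_trans_of_irrefl (fun τ σ : Cfg N => H N h τ < H N h σ)).induction with
  | _ σ ih =>
    by_cases hσ : robust N h σ
    · simp only [pow_mulVec_apply_of_robust hσ, hv_robust σ hσ, tendsto_const_nhds]
    set r : ℝ := ((deltaSet N h σ).card : ℝ) / (N : ℝ) ^ 2 with hr
    have hcard : 0 < ((deltaSet N h σ).card : ℝ) := by
      exact_mod_cast Finset.card_pos.mpr
        (Finset.nonempty_iff_ne_empty.mpr (mt deltaSet_eq_empty_iff.mp hσ))
    have hN : (0 : ℝ) < (N : ℝ) ^ 2 := by have := Nat.pos_of_neZero N; positivity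
    have hr1 : r ≤ 1 := by
      rw [div_le_one hN]
      exact_mod_cast (Finset.card_le_univ _).trans_eq (by simp [ZMod.card, sq])
    refine tendsto_of_convex_recurrence (c := fun κ => susceptibleMean h σ (Pmat N h ^ κ *ᵥ f))
      (by positivity) hr1 (fun κ => ?_) ?_
    · rw [pow_succ', ← Matrix.mulVec_mulVec, Pmat_mulVec_apply, susceptibleMean, hr]
      field_simp
    · rw [hv_mean σ hσ]
      refine (tendsto_finsetSum _ fun i hi => ih _ ?_).const_mul _
      exact lt_of_le_of_ne (mem_deltaSet.mp hi) (hH σ i)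

end Absorption

section Paths

variable {N : ℕ} [NeZero N] {h : ℝ}

lemma isPathBetween_iff {σ η : Cfg N} {l : List (Cfg N)} :
    IsPathBetween N h σ η l ↔
      l.head? = some σ ∧ l.getLast? = some η ∧ l.IsChain (stepRel N h) := Iff.rfl

lemma isPathBetween_cons_iff {σ η τ : Cfg N} {t : List (Cfg N)} :
    IsPathBetween N h σ η (τ :: t) ↔
      τ = σ ∧ (t = [] ∧ η = σ ∨ ∃ i ∈ deltaSet N h σ, IsPathBetween N h (flip N σ i) η t) := by
  cases t with
  | nil =>
    simp only [isPathBetween_iff, List.head?_cons, List.getLast?_singleton, List.isChain_singleton,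
      List.head?_nil, reduceCtorEq, Option.some.injEq, false_and, and_false, exists_false,
      true_and, or_false]
    exact and_congr_right fun hτ => by rw [hτ, eq_comm, and_true]
  | cons b t =>
    simp only [isPathBetween_iff, List.head?_cons, Option.some.injEq, List.getLast?_cons_cons,
      List.isChain_cons_cons, stepRel, mem_deltaSet, susceptible, reduceCtorEq, false_and, false_or]
    constructor
    · rintro ⟨rfl, hlast, ⟨⟨i, rfl⟩, hle⟩, hchain⟩
      exact ⟨rfl, i, hle, rfl, hlast, hchain⟩
    · rintro ⟨rfl, i, hle, rfl, hlast, hchain⟩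
      exact ⟨rfl, hlast, ⟨⟨i, rfl⟩, hle⟩, hchain⟩

lemma IsPathBetween.nodup (hH : ∀ σ i, H N h (flip N σ i) ≠ H N h σ) {σ η : Cfg N}
    {l : List (Cfg N)} (hl : IsPathBetween N h σ η l) : l.Nodup := by
  have hdesc : (l.map (H N h)).IsChain (· > ·) :=
    (List.isChain_map _).mpr <| hl.2.2.imp fun τ _ ⟨⟨i, hi⟩, hle⟩ =>
      hi ▸ lt_of_le_of_ne (hi ▸ hle) (hH τ i)
  exact (List.isChain_iff_pairwise.mp hdesc).nodup.of_map _

lemma finite_isPathBetween (hH : ∀ σ i, H N h (flip N σ i) ≠ H N h σ) (σ η : Cfg N) :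
    Finite {l : List (Cfg N) // IsPathBetween N h σ η l} :=
  Finite.of_injective (β := {l : List (Cfg N) // l.Nodup}) (fun l => ⟨l.1, l.2.nodup hH⟩)
    fun _ _ hl => Subtype.ext (Subtype.mk.inj hl)

noncomputable def pathSum (h : ℝ) (σ η : Cfg N) : ℝ :=
  ∑' l : {l : List (Cfg N) // IsPathBetween N h σ η l}, pathWeight N h l.1

lemma pathSum_of_robust {σ : Cfg N} (hσ : robust N h σ) (η : Cfg N) :
    pathSum h σ η = if σ = η then 1 else 0 := by
  have hpaths : ∀ l, IsPathBetween N h σ η l ↔ l = [σ] ∧ η = σ := by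
    rintro (_ | ⟨τ, t⟩)
    · simp [isPathBetween_iff]
    · simp [isPathBetween_cons_iff, deltaSet_eq_empty_iff.mpr hσ, and_assoc]
  split_ifs with hση
  · subst hση
    rw [pathSum, tsum_eq_single ⟨[σ], (hpaths _).2 ⟨rfl, rfl⟩⟩
      fun l hl => absurd (Subtype.ext ((hpaths _).1 l.2).1) hl]
    simp [pathWeight]
  · have : IsEmpty {l // IsPathBetween N h σ η l} := ⟨fun l => hση ((hpaths _).1 l.2).2.symm⟩
    exact tsum_empty

lemma pathSum_self_of_robust {σ : Cfg N} (hσ : robust N h σ) : pathSum h σ σ = 1 := by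
  rw [pathSum_of_robust hσ, if_pos rfl]

noncomputable def consPathEquiv {σ η : Cfg N} (hne : η ≠ σ) :
    (Σ i : deltaSet N h σ, {t : List (Cfg N) // IsPathBetween N h (flip N σ i) η t}) ≃
      {l : List (Cfg N) // IsPathBetween N h σ η l} :=
  Equiv.ofBijective
    (fun p => ⟨σ :: p.2.1, isPathBetween_cons_iff.mpr ⟨rfl, Or.inr ⟨p.1, p.1.2, p.2.2⟩⟩⟩)
    ⟨by
      rintro ⟨i, t, ht⟩ ⟨j, t', ht'⟩ heq
      obtain rfl : t = t' := (List.cons_injective (Subtype.ext_iff.mp heq))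
      obtain rfl : i = j := Subtype.ext <| flip_injective σ <|
        Option.some_injective _ (ht.1.symm.trans ht'.1)
      rfl,
    by
      rintro ⟨_ | ⟨τ, t⟩, hl⟩
      · simp [isPathBetween_iff] at hl
      · obtain ⟨rfl, ⟨-, hησ⟩ | ⟨i, hi, ht⟩⟩ := isPathBetween_cons_iff.mp hl
        · exact absurd hησ hne
        · exact ⟨⟨⟨i, hi⟩, t, ht⟩, rfl⟩⟩

lemma pathWeight_cons (σ : Cfg N) {t : List (Cfg N)} (ht : t ≠ []) :
    pathWeight N h (σ :: t) = ((deltaSet N h σ).card : ℝ)⁻¹ * pathWeight N h t := by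
  rw [pathWeight, pathWeight, List.dropLast_cons_of_ne_nil ht, List.map_cons, List.prod_cons]

lemma pathSum_eq_susceptibleMean (hH : ∀ σ i, H N h (flip N σ i) ≠ H N h σ) {σ η : Cfg N}
    (hne : η ≠ σ) : pathSum h σ η = susceptibleMean h σ (fun τ => pathSum h τ η) := by
  have := fun τ => finite_isPathBetween hH τ η
  rw [pathSum, ← (consPathEquiv hne).tsum_eq, Summable.tsum_sigma' (fun _ => .of_finite) .of_finite,
    susceptibleMean, ← Finset.tsum_subtype, ← tsum_mul_left]
  refine tsum_congr fun i => ?_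
  rw [pathSum, ← tsum_mul_left]
  refine tsum_congr fun t => ?_
  exact pathWeight_cons σ fun hnil => by simpa [show t.1 = [] from hnil] using t.2.1

end Paths

section Limit

variable {N : ℕ} [NeZero N] {h : ℝ}

lemma tendsto_pow_apply_pathSum (hH : ∀ σ i, H N h (flip N σ i) ≠ H N h σ) {η : Cfg N}
    (hη : robust N h η) (σ : Cfg N) :
    Tendsto (fun κ => (Pmat N h ^ κ) σ η) atTop (𝓝 (pathSum h σ η)) := by
  simpa [Matrix.mulVec_single_one] using tendsto_pow_mulVec_apply hH (Pi.single η 1)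
    (fun τ => pathSum h τ η) (fun τ hτ => by rw [pathSum_of_robust hτ, Pi.single_apply])
    (fun τ hτ => pathSum_eq_susceptibleMean hH fun hητ => hτ (hητ ▸ hη)) σ

lemma tendsto_sum_pow_apply_Uset (hH : ∀ σ i, H N h (flip N σ i) ≠ H N h σ) (σ : Cfg N) :
    Tendsto (fun κ => ∑ η ∈ Uset N h, (Pmat N h ^ κ) σ η) atTop (𝓝 1) := by
  have hmean : ∀ τ, ¬ robust N h τ → (1 : ℝ) = susceptibleMean h τ 1 := fun τ hτ => by
    have : (deltaSet N h τ).card ≠ 0 := by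
      rwa [Ne, Finset.card_eq_zero, deltaSet_eq_empty_iff]
    simp [susceptibleMean, this]
  simpa [Matrix.mulVec, dotProduct, Finset.sum_ite, Uset] using
    tendsto_pow_mulVec_apply hH (fun τ => if robust N h τ then 1 else 0) 1
      (fun τ hτ => by simp [hτ]) hmean σ

lemma tendsto_Qκ (hH : ∀ σ i, H N h (flip N σ i) ≠ H N h σ) {η : Cfg N} (hη : robust N h η)
    (σ : Cfg N) (a : Act N) :
    Tendsto (fun κ => Qκ N h κ σ a η) atTop (𝓝 (pathSum h (post N σ a) η)) := by
  have hdiv := (tendsto_pow_apply_pathSum hH hη (post N σ a)).div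
    (tendsto_sum_pow_apply_Uset hH (post N σ a)) one_ne_zero
  rw [div_one] at hdiv
  exact hdiv.congr fun κ => by simp [Qκ, Ptilκ, hη]

end Limit

theorem Qkappa_limit_path_sum_general (N : ℕ) [NeZero N] (hN : 5 ≤ N)
    (h : ℝ) (hh0 : 0 < h) (hh1 : h < 1)
    (i j : ℕ)
    (a : Act N)
    (η : Cfg N)
    (hη₁ : U1 N h η ∨ η = minusCfg N) :
    (η = post N (sigmaRect N i j) a →
      Tendsto (fun κ : ℕ => Qκ N h κ (sigmaRect N i j) a η) atTop (𝓝 1)) ∧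
    (η ≠ post N (sigmaRect N i j) a →
      Tendsto (fun κ : ℕ => Qκ N h κ (sigmaRect N i j) a η) atTop
        (𝓝 (∑' l : {l : List (Cfg N) //
              IsPathBetween N h (post N (sigmaRect N i j) a) η l},
            pathWeight N h l.1))) := by
  have hH := H_flip_ne (by omega : 1 < N) hh0 hh1
  have hη : robust N h η := hη₁.elim And.left fun hmin => hmin ▸ robust_minusCfg (by omega) hh1
  have hlim := tendsto_Qκ hH hη (sigmaRect N i j) a
  refine ⟨fun hpost => ?_, fun _ => hlim⟩
  rwa [← hpost, pathSum_self_of_robust hη] at hlim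

/-- the limit of `Q_κ(η | σ_{(i,j)}, a)` exists and equals 1 if
`η = σ_{(i,j)}^a`, and equals the sum of the weights of downhill paths from
`σ_{(i,j)}^a` to `η` otherwise. -/
theorem Qkappa_limit_path_sum (N : ℕ) [NeZero N] (hN : 5 ≤ N)
    (h : ℝ) (hh0 : 0 < h) (hh1 : h < 1)
    (i j : ℕ) (hS : ShatP N (i, j)) (hne : (i, j) ≠ ((0 : ℕ), (0 : ℕ)))
    (a : Act N) (i' j' : ℕ) (hS' : ShatP N (i', j'))
    (η : Cfg N)
    (hη₁ : U1 N h η ∨ η = minusCfg N)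
    (hη₂ : downhillOf N h (post N (sigmaRect N i j) a) η)
    (hη₃ : Irel N h η (i', j')) :
    (η = post N (sigmaRect N i j) a →
      Tendsto (fun κ : ℕ => Qκ N h κ (sigmaRect N i j) a η) atTop (𝓝 1)) ∧
    (η ≠ post N (sigmaRect N i j) a →
      Tendsto (fun κ : ℕ => Qκ N h κ (sigmaRect N i j) a η) atTop
        (𝓝 (∑' l : {l : List (Cfg N) //
              IsPathBetween N h (post N (sigmaRect N i j) a) η l},
            pathWeight N h l.1))) :=
  Qkappa_limit_path_sum_general N hN h hh0 hh1 i j a η hη₁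

end IsingS
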